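/- Let P be a row-stochastic matrix on a nonempty finite type S and let s be a state that is recurrent for P. Then there exists a pmf π on S that is stationary for P (∑_t π t * P t t' = π t' for all t'), with π s > 0 and with the support of π contained in the set of states reachable from s. -/

import Mathlib

/-!
A limit point `π` of the Cesàro averages `(N + 1)⁻¹ ∑_{k ≤ N} P^k(s, ·)` is a stationary
distribution supported on the states reachable from `s`. Recurrence of `s` forces every state `t`
reachable from `s` to reach `s` back: otherwise some path from `s` to `t` that avoids `s` is
followed with positive probability (the chain is driven by the binary digits of a uniform `ω`, and
prescribing finitely many of them is an event of positive Lebesgue measure), and from `t` on the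
chain never returns to `s`. Taking `u` with `π u > 0` and `n` with `P^n(u, s) > 0`, stationarity
gives `π s ≥ π u * P^n(u, s) > 0`.
-/

open MeasureTheory Filter Finset

noncomputable section

def IsPmf {A : Type*} [Fintype A] (p : A → ℝ) : Prop :=
  (∀ a, 0 ≤ p a) ∧ ∑ a, p a = 1

noncomputable def entropy {A : Type*} [Fintype A] (p : A → ℝ) : ℝ :=
  -∑ a, p a * Real.log (p a)

def IsStochastic {S : Type*} [Fintype S] (P : S → S → ℝ) : Prop :=
  (∀ s s', 0 ≤ P s s') ∧ ∀ s, ∑ s', P s s' = 1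

/-- The `n`-th binary digit of `ω`, as a real number `0` or `1`. -/
def bitAt (ω : ℝ) (n : ℕ) : ℝ := if ⌊ω * 2 ^ (n + 1)⌋ % 2 = 1 then 1 else 0

/-- A sequence of i.i.d. uniform random variables on `[0,1)`, extracted from the binary
digits of a single uniform sample `ω ∈ [0,1)` by interleaving. -/
noncomputable def unifAt (ω : ℝ) (k : ℕ) : ℝ := ∑' n : ℕ, bitAt ω (Nat.pair k n) / 2 ^ (n + 1)

/-- CDF-inversion step function: given row `P s` and `x ∈ [0,1)`, produce the next state. -/
noncomputable def stepFun {S : Type*} [Fintype S] [Nonempty S] (P : S → S → ℝ) (s : S) (x : ℝ) : S :=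
  (Fintype.equivFin S).symm
    (@dite _ (∃ k, x < ∑ j ∈ Finset.Iic k, P s ((Fintype.equivFin S).symm j))
      (Classical.propDecidable _)
      (fun h => @Fin.find _ (fun i => x < ∑ j ∈ Finset.Iic i, P s ((Fintype.equivFin S).symm j))
        (Classical.decPred _) h)
      (fun _ => ⟨0, Fintype.card_pos⟩))

/-- The trajectory of the Markov chain with transition matrix `P` started at `s0`,
driven by the i.i.d. uniforms extracted from `ω`. -/
noncomputable def trajFun {S : Type*} [Fintype S] [Nonempty S] (P : S → S → ℝ) (s0 : S) (ω : ℝ) :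
    ℕ → S
  | 0 => s0
  | k + 1 => stepFun P (trajFun P s0 ω k) (unifAt ω k)

/-- The law `μ_{s0}` of the time-homogeneous Markov chain with transition matrix `P`
started at `s0`, as a measure on path space `ℕ → S` (each copy of `S` carrying the
discrete σ-algebra `⊤`). -/
noncomputable def chainLaw {S : Type*} [Fintype S] [Nonempty S] (P : S → S → ℝ) (s0 : S) :
    @Measure (ℕ → S) (@MeasurableSpace.pi ℕ (fun _ => S) (fun _ => ⊤)) :=
  @Measure.map ℝ (ℕ → S) _ (@MeasurableSpace.pi ℕ (fun _ => S) (fun _ => ⊤))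
    (trajFun P s0) (volume.restrict (Set.Ico (0 : ℝ) 1))

/-- `s` is recurrent for `P`: the chain started at `s` returns to `s` with probability one. -/
def Recurrent {S : Type*} [Fintype S] [Nonempty S] (P : S → S → ℝ) (s : S) : Prop :=
  chainLaw P s {x | ∃ k ≥ 1, x k = s} = 1

/-- `t` is reachable from `s` under `P`: some `n`-step transition probability is positive. -/
def Reachable {S : Type*} [Fintype S] [DecidableEq S] (P : S → S → ℝ) (s t : S) : Prop :=
  ∃ n : ℕ, 0 < (Matrix.of P ^ n) s t

/-- A recurrent class of `P`: all states recurrent, mutually communicating, and closed. -/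
def IsRecurrentClass {S : Type*} [Fintype S] [Nonempty S] [DecidableEq S]
    (P : S → S → ℝ) (C : Set S) : Prop :=
  (∀ s ∈ C, Recurrent P s) ∧
  (∀ s ∈ C, ∀ t ∈ C, Reachable P s t ∧ Reachable P t s) ∧
  (∀ s ∈ C, ∀ t, t ∉ C → P s t = 0)

def IsKernel {S U : Type*} [Fintype S] [Fintype U] (Q : S → U → S → ℝ) : Prop :=
  (∀ s u s', 0 ≤ Q s u s') ∧ ∀ s u, ∑ s', Q s u s' = 1

def IsPolicy {S U : Type*} [Fintype U] (K : S → U → ℝ) : Prop :=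
  (∀ s u, 0 ≤ K s u) ∧ ∀ s, ∑ u, K s u = 1

/-- Closed-loop transition matrix `P_K s s' = ∑_u K s u * Q s u s'`. -/
def closedLoop {S U : Type*} [Fintype U] (Q : S → U → S → ℝ) (K : S → U → ℝ) : S → S → ℝ :=
  fun s s' => ∑ u, K s u * Q s u s'

/-- Marginal on states of a pmf on `S × U`. -/
def marginalS {S U : Type*} [Fintype U] (f : S × U → ℝ) : S → ℝ := fun s => ∑ u, f (s, u)

/-- The feasible set `D(Q,F)`. -/
def Feasible {S U : Type*} [Fintype S] [Fintype U] (Q : S → U → S → ℝ) (F : Set S)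
    (f : S × U → ℝ) : Prop :=
  IsPmf f ∧ (∀ s' : S, marginalS f s' = ∑ s : S, ∑ u : U, Q s u s' * f (s, u)) ∧
  ∀ s ∈ F, marginalS f s = 0

/-- The policy induced by `f` (relative to a fixed policy `G`). -/
noncomputable def inducedPolicy {S U : Type*} [Fintype U] (G : S → U → ℝ) (f : S × U → ℝ) :
    S → U → ℝ :=
  fun s u => if 0 < marginalS f s then f (s, u) / marginalS f s else G s u

/-- The set `S^R_{K,F}` of `F`-safe recurrent states under policy `K`. -/
def FSafeRecStates {S U : Type*} [Fintype S] [Nonempty S] [DecidableEq S] [Fintype U]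
    (Q : S → U → S → ℝ) (F : Set S) (K : S → U → ℝ) : Set S :=
  {s | Recurrent (closedLoop Q K) s ∧
    ∀ t, Reachable (closedLoop Q K) s t → ∀ t' ∈ F, closedLoop Q K t t' = 0}

/-- The maximal set `S^R_F = ⋃_K S^R_{K,F}` of `F`-safe recurrent states. -/
def SRF {S U : Type*} [Fintype S] [Nonempty S] [DecidableEq S] [Fintype U]
    (Q : S → U → S → ℝ) (F : Set S) : Set S :=
  ⋃ K ∈ {K : S → U → ℝ | IsPolicy K}, FSafeRecStates Q F K


section StationaryDistribution

open Matrix Topology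

variable {S : Type*} [Fintype S] [DecidableEq S] {M : Matrix S S ℝ}

lemma row_mem_stdSimplex (hM : M ∈ rowStochastic ℝ S) (s : S) : M s ∈ stdSimplex ℝ S :=
  ⟨fun _ => nonneg_of_mem_rowStochastic hM, sum_row_of_mem_rowStochastic hM s⟩

omit [DecidableEq S] in
lemma norm_le_one_of_mem_stdSimplex {v : S → ℝ} (hv : v ∈ stdSimplex ℝ S) : ‖v‖ ≤ 1 :=
  (pi_norm_le_iff_of_nonneg zero_le_one).2 fun t => by
    rw [Real.norm_eq_abs, abs_le]
    exact ⟨by linarith [hv.1 t], (mem_Icc_of_mem_stdSimplex hv t).2⟩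

lemma vecMul_pow_eq_self {π : S → ℝ} (hπ : π ᵥ* M = π) (n : ℕ) : π ᵥ* M ^ n = π := by
  induction n with
  | zero => rw [pow_zero, vecMul_one]
  | succ n ih => rw [pow_succ, ← vecMul_vecMul, ih, hπ]

lemma pos_of_vecMul_eq_self (hM : M ∈ rowStochastic ℝ S) {π : S → ℝ} (hπ₀ : ∀ t, 0 ≤ π t)
    (hπ : π ᵥ* M = π) {u s : S} (hu : 0 < π u) {n : ℕ} (hn : 0 < (M ^ n) u s) : 0 < π s := by
  rw [← vecMul_pow_eq_self hπ n]
  exact lt_of_lt_of_le (mul_pos hu hn) <| single_le_sum (f := fun t => π t * (M ^ n) t s)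
    (fun t _ => mul_nonneg (hπ₀ t) (nonneg_of_mem_rowStochastic (pow_mem hM n))) (mem_univ u)

def cesaroRow (M : Matrix S S ℝ) (s : S) (N : ℕ) : S → ℝ :=
  ((N : ℝ) + 1)⁻¹ • ∑ k ∈ range (N + 1), (M ^ k) s

lemma cesaroRow_mem_stdSimplex (hM : M ∈ rowStochastic ℝ S) (s : S) (N : ℕ) :
    cesaroRow M s N ∈ stdSimplex ℝ S := by
  rw [cesaroRow, smul_sum]
  refine (convex_stdSimplex ℝ S).sum_mem (fun _ _ => by positivity) ?_
    fun k _ => row_mem_stdSimplex (pow_mem hM k) s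
  rw [sum_const, card_range, nsmul_eq_mul]
  push_cast
  exact mul_inv_cancel₀ (by positivity)

lemma cesaroRow_vecMul_sub (s : S) (N : ℕ) :
    cesaroRow M s N ᵥ* M - cesaroRow M s N =
      ((N : ℝ) + 1)⁻¹ • ((M ^ (N + 1)) s - (M ^ 0) s) := by
  rw [cesaroRow, smul_vecMul, sum_vecMul, ← smul_sub, ← sum_sub_distrib,
    ← sum_range_sub (fun k => (M ^ k) s)]
  simp only [pow_succ]
  rfl

lemma tendsto_cesaroRow_vecMul_sub (hM : M ∈ rowStochastic ℝ S) (s : S) :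
    Tendsto (fun N => cesaroRow M s N ᵥ* M - cesaroRow M s N) atTop (𝓝 0) := by
  simp_rw [cesaroRow_vecMul_sub]
  refine Tendsto.zero_smul_isBoundedUnder_le ?_ (isBoundedUnder_of ⟨2, fun N => ?_⟩)
  · exact tendsto_inv_atTop_zero.comp
      (tendsto_atTop_add_const_right _ 1 tendsto_natCast_atTop_atTop)
  · have h := norm_sub_le ((M ^ (N + 1)) s) ((M ^ 0) s)
    have h₁ := norm_le_one_of_mem_stdSimplex (row_mem_stdSimplex (pow_mem hM (N + 1)) s)
    have h₀ := norm_le_one_of_mem_stdSimplex (row_mem_stdSimplex (pow_mem hM 0) s)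
    simp only [Function.comp_apply]
    linarith

/-- Krylov–Bogolyubov: `π` is a limit point of the Cesàro averages of the rows `(M ^ k) s`. -/
lemma exists_stationary_of_cesaro (hM : M ∈ rowStochastic ℝ S) (s : S) :
    ∃ π ∈ stdSimplex ℝ S, π ᵥ* M = π ∧ ∀ t, 0 < π t → ∃ n, 0 < (M ^ n) s t := by
  obtain ⟨π, hπ, φ, hφ, hlim⟩ :=
    (isCompact_stdSimplex ℝ S).tendsto_subseq (cesaroRow_mem_stdSimplex hM s)
  refine ⟨π, hπ, ?_, fun t ht => ?_⟩
  · have h₁ : Tendsto (fun N => cesaroRow M s (φ N) ᵥ* M - cesaroRow M s (φ N)) atTop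
        (𝓝 (π ᵥ* M - π)) :=
      ((continuous_id.matrix_vecMul continuous_const).tendsto π |>.comp hlim).sub hlim
    exact sub_eq_zero.1 <| tendsto_nhds_unique h₁ <|
      (tendsto_cesaroRow_vecMul_sub hM s).comp hφ.tendsto_atTop
  · by_contra! h
    have hzero : ∀ N, cesaroRow M s N t = 0 := fun N => by
      simp [cesaroRow, fun k => le_antisymm (h k) (nonneg_of_mem_rowStochastic (pow_mem hM k))]
    exact ht.ne' <| (isClosed_eq (continuous_apply t) continuous_const).mem_of_tendsto hlim
      (Eventually.of_forall fun N => hzero (φ N))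

end StationaryDistribution

section Reachability

open Matrix

variable {S : Type*} [Fintype S] [DecidableEq S] {P : S → S → ℝ}

lemma IsStochastic.mem_rowStochastic (hP : IsStochastic P) : of P ∈ rowStochastic ℝ S :=
  mem_rowStochastic_iff_sum.2 hP

lemma reachable_of_pos_of_reachable (hP : IsStochastic P) {w w' s : S} (h : 0 < P w w')
    (h' : Reachable P w' s) : Reachable P w s := by
  obtain ⟨n, hn⟩ := h'
  refine ⟨n + 1, ?_⟩
  rw [pow_succ', mul_apply]
  have hnonneg : ∀ c, 0 ≤ (of P ^ n) c s :=
    fun c => nonneg_of_mem_rowStochastic (pow_mem hP.mem_rowStochastic n)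
  exact lt_of_lt_of_le (mul_pos h hn) <| single_le_sum (f := fun c => of P w c * (of P ^ n) c s)
    (fun c _ => mul_nonneg (hP.1 w c) (hnonneg c)) (mem_univ w')

lemma exists_path_of_reachable (hP : IsStochastic P) {s t : S} (ht : Reachable P s t)
    (hts : t ≠ s) : ∃ (m : ℕ) (v : ℕ → S), v 0 = s ∧ v m = t ∧
      (∀ k < m, 0 < P (v k) (v (k + 1))) ∧ ∀ k, 1 ≤ k → k ≤ m → v k ≠ s := by
  obtain ⟨n, hn⟩ := ht
  induction n generalizing t with
  | zero => simp [one_apply, hts.symm] at hn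
  | succ n ih =>
    have hnonneg : ∀ c, 0 ≤ (of P ^ n) s c :=
      fun c => nonneg_of_mem_rowStochastic (pow_mem hP.mem_rowStochastic n)
    rw [pow_succ, mul_apply] at hn
    obtain ⟨c, -, hc⟩ := (sum_pos_iff_of_nonneg fun c _ => mul_nonneg (hnonneg c) (hP.1 c t)).1 hn
    have hsc : 0 < (of P ^ n) s c := pos_of_mul_pos_left hc (hP.1 c t)
    have hct : 0 < P c t := pos_of_mul_pos_right hc (hnonneg c)
    by_cases hcs : c = s
    · subst hcs
      refine ⟨1, fun k => if k = 0 then c else t, rfl, rfl, fun k hk => ?_, fun k hk1 _ => ?_⟩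
      · obtain rfl : k = 0 := by omega
        exact hct
      · simp [show k ≠ 0 by omega, hts]
    · obtain ⟨m, v, hv0, hvm, hpos, havoid⟩ := ih hcs hsc
      refine ⟨m + 1, fun k => if k ≤ m then v k else t, by simp [hv0], by simp,
        fun k hk => ?_, fun k hk1 hk => ?_⟩
      · rcases Nat.lt_or_ge k m with hkm | hkm
        · simpa [hkm.le, Nat.succ_le_of_lt hkm] using hpos k hkm
        · obtain rfl : k = m := by omega
          simpa [hvm] using hct
      · by_cases hkm : k ≤ m
        · simpa [hkm] using havoid k hk1 hkm
        · simpa [hkm] using hts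

end Reachability

section BinaryDigits

open Real

lemma digits_two_val (x : ℝ) (p : ℕ) : (digits x 2 p : ℕ) = ⌊x * 2 ^ (p + 1)⌋₊ % 2 := by
  simp [digits]

lemma digits_two_eq_iff {x : ℝ} {p : ℕ} {i : Fin 2} :
    digits x 2 p = i ↔ ⌊x * 2 ^ (p + 1)⌋₊ % 2 = i := by
  rw [Fin.ext_iff, digits_two_val]

lemma measurableSet_digits_eq (p : ℕ) (i : Fin 2) : MeasurableSet {x : ℝ | digits x 2 p = i} := by
  have h : Measurable fun x : ℝ => ⌊x * 2 ^ (p + 1)⌋₊ :=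
    Nat.measurable_floor.comp (measurable_id.mul_const _)
  simp only [digits_two_eq_iff]
  exact h (MeasurableSet.of_discrete (s := {n : ℕ | n % 2 = i}))

lemma bitAt_eq_digits {x : ℝ} (hx : 0 ≤ x) (p : ℕ) : bitAt x p = ((digits x 2 p : ℕ) : ℝ) := by
  have h := Int.natCast_floor_eq_floor (show 0 ≤ x * 2 ^ (p + 1) by positivity)
  rw [bitAt, digits_two_val, ← h]
  rcases Nat.mod_two_eq_zero_or_one ⌊x * 2 ^ (p + 1)⌋₊ with h2 | h2 <;> simp [h2] <;> omega

lemma unifAt_eq_ofDigits {ω : ℝ} (hω : 0 ≤ ω) (k : ℕ) :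
    unifAt ω k = ofDigits fun n => digits ω 2 (Nat.pair k n) := by
  refine tsum_congr fun n => ?_
  rw [bitAt_eq_digits hω, ofDigitsTerm, div_eq_mul_inv, Nat.cast_ofNat]

lemma ofDigits_lt_one {d : ℕ → Fin 2} {n : ℕ} (hn : d n = 0) : ofDigits d < 1 := by
  rw [← ofDigits_const_last_eq_one 1]
  refine Summable.tsum_lt_tsum (i := n) (fun i => ?_) ?_ summable_ofDigitsTerm
    summable_ofDigitsTerm
  · unfold ofDigitsTerm
    gcongr
    exact_mod_cast Fin.le_last (d i)
  · simp [ofDigitsTerm, hn]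

lemma floor_mul_two_pow_div {x : ℝ} {p p' : ℕ} (h : p' ≤ p) :
    ⌊x * 2 ^ (p' + 1)⌋₊ = ⌊x * 2 ^ (p + 1)⌋₊ / 2 ^ (p - p') := by
  have h2 : (2 : ℝ) ^ (p + 1) = 2 ^ (p' + 1) * 2 ^ (p - p') := by
    rw [← pow_add]
    congr 1
    omega
  rw [← Nat.floor_div_natCast, h2]
  push_cast
  field_simp

lemma floor_add_inv_two_pow_mul {x : ℝ} (hx : 0 ≤ x) {p p' : ℕ} (h : p ≤ p') :
    ⌊(x + ((2 : ℝ) ^ (p + 1))⁻¹) * 2 ^ (p' + 1)⌋₊ = ⌊x * 2 ^ (p' + 1)⌋₊ + 2 ^ (p' - p) := by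
  have h2 : (2 : ℝ) ^ (p' + 1) = 2 ^ (p + 1) * 2 ^ (p' - p) := by
    rw [← pow_add]
    congr 1
    omega
  rw [← Nat.floor_add_natCast (by positivity), h2]
  push_cast
  field_simp

lemma digits_add_inv_two_pow {x : ℝ} (hx : 0 ≤ x) {p : ℕ} (h : digits x 2 p = 0) :
    digits (x + ((2 : ℝ) ^ (p + 1))⁻¹) 2 = Function.update (digits x 2) p 1 := by
  have hp : ⌊x * 2 ^ (p + 1)⌋₊ % 2 = 0 := digits_two_eq_iff.1 h
  funext p'
  rcases lt_trichotomy p' p with hlt | rfl | hgt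
  · rw [Function.update_of_ne hlt.ne, digits_two_eq_iff, digits_two_val,
      floor_mul_two_pow_div hlt.le, floor_mul_two_pow_div (x := x) hlt.le,
      floor_add_inv_two_pow_mul hx le_rfl, Nat.sub_self, pow_zero]
    obtain ⟨r, hr⟩ : ∃ r, p - p' = r + 1 := ⟨p - p' - 1, by omega⟩
    rw [hr, Nat.pow_succ', ← Nat.div_div_eq_div_mul, ← Nat.div_div_eq_div_mul]
    congr 2
    omega
  · rw [Function.update_self, digits_two_eq_iff, floor_add_inv_two_pow_mul hx le_rfl,
      Nat.sub_self, pow_zero, Fin.val_one]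
    omega
  · rw [Function.update_of_ne hgt.ne', digits_two_eq_iff, digits_two_val,
      floor_add_inv_two_pow_mul hx hgt.le, show p' - p = (p' - p - 1) + 1 by omega, pow_succ]
    omega

lemma digits_sub_inv_two_pow {y : ℝ} {p : ℕ} (h : digits y 2 p = 1) :
    0 ≤ y - ((2 : ℝ) ^ (p + 1))⁻¹ ∧ digits (y - ((2 : ℝ) ^ (p + 1))⁻¹) 2 p = 0 := by
  have hp : ⌊y * 2 ^ (p + 1)⌋₊ % 2 = 1 := digits_two_eq_iff.1 h
  have hle : ((2 : ℝ) ^ (p + 1))⁻¹ ≤ y := by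
    have : 1 ≤ y * 2 ^ (p + 1) := (Nat.one_le_floor_iff _).1 (by omega)
    rw [inv_le_iff_one_le_mul₀ (by positivity)]
    linarith
  have hx : 0 ≤ y - ((2 : ℝ) ^ (p + 1))⁻¹ := sub_nonneg.2 hle
  have hfloor := floor_add_inv_two_pow_mul hx (le_refl p)
  rw [sub_add_cancel, Nat.sub_self, pow_zero] at hfloor
  refine ⟨hx, digits_two_eq_iff.2 ?_⟩
  rw [Fin.val_zero]
  omega

lemma add_inv_two_pow_lt_one {x : ℝ} (hx : x ∈ Set.Ico 0 1) {p : ℕ} (h : digits x 2 p = 0) :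
    x + ((2 : ℝ) ^ (p + 1))⁻¹ < 1 := by
  have hp : ⌊x * 2 ^ (p + 1)⌋₊ % 2 = 0 := digits_two_eq_iff.1 h
  have h2 : (0 : ℝ) < 2 ^ (p + 1) := by positivity
  have hlt : ⌊x * 2 ^ (p + 1)⌋₊ < 2 ^ (p + 1) := by
    rw [Nat.floor_lt (by have := hx.1; positivity)]
    push_cast
    nlinarith [hx.2]
  have key : ⌊(x + ((2 : ℝ) ^ (p + 1))⁻¹) * 2 ^ (p + 1)⌋₊ < 2 ^ (p + 1) := by
    rw [floor_add_inv_two_pow_mul hx.1 le_rfl, Nat.sub_self, pow_zero]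
    have := Nat.pow_succ 2 p
    omega
  rw [Nat.floor_lt (by have := hx.1; positivity)] at key
  push_cast at key
  nlinarith

def digitCylinder (F : Finset ℕ) (ε : ℕ → Fin 2) : Set ℝ :=
  {x | x ∈ Set.Ico 0 1 ∧ ∀ p ∈ F, digits x 2 p = ε p}

lemma preimage_add_inv_two_pow_digitCylinder {F : Finset ℕ} {p : ℕ} (hp : p ∉ F)
    (ε : ℕ → Fin 2) :
    (· + ((2 : ℝ) ^ (p + 1))⁻¹) ⁻¹' (digitCylinder F ε ∩ {x | digits x 2 p = 1}) =
      digitCylinder F ε ∩ {x | digits x 2 p = 0} := by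
  have hδ : (0 : ℝ) < ((2 : ℝ) ^ (p + 1))⁻¹ := by positivity
  ext x
  simp only [digitCylinder, Set.mem_preimage, Set.mem_inter_iff, Set.mem_ofPred_eq, Set.mem_Ico]
  constructor
  · rintro ⟨⟨⟨-, hy1⟩, hyF⟩, hyp⟩
    obtain ⟨hx0, hxp⟩ := digits_sub_inv_two_pow hyp
    rw [add_sub_cancel_right] at hx0 hxp
    refine ⟨⟨⟨hx0, by linarith⟩, fun q hq => ?_⟩, hxp⟩
    rw [← hyF q hq, digits_add_inv_two_pow hx0 hxp,
      Function.update_of_ne (by rintro rfl; exact hp hq)]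
  · rintro ⟨⟨hx, hxF⟩, hxp⟩
    have hdig := digits_add_inv_two_pow hx.1 hxp
    refine ⟨⟨⟨by linarith [hx.1], add_inv_two_pow_lt_one hx hxp⟩, fun q hq => ?_⟩, ?_⟩
    · rw [hdig, Function.update_of_ne (by rintro rfl; exact hp hq), hxF q hq]
    · rw [hdig, Function.update_self]

lemma volume_digitCylinder (F : Finset ℕ) (ε : ℕ → Fin 2) :
    volume (digitCylinder F ε) = 2⁻¹ ^ #F := by
  induction F using Finset.induction_on with
  | empty =>
    rw [show digitCylinder ∅ ε = Set.Ico 0 1 by ext; simp [digitCylinder]]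
    simp
  | @insert p F hp ih =>
    set C := digitCylinder F ε
    have hhalf : ∀ i : Fin 2, volume (C ∩ {x | digits x 2 p = i}) = 2⁻¹ * volume C := by
      -- translation by `2⁻¹ ^ (p + 1)` carries the digit-`0` half of `C` onto the digit-`1` half
      have h01 : volume (C ∩ {x | digits x 2 p = 0}) = volume (C ∩ {x | digits x 2 p = 1}) := by
        rw [← preimage_add_inv_two_pow_digitCylinder hp, measure_preimage_add_right]
      have hC : volume C = 2 * volume (C ∩ {x | digits x 2 p = 1}) := by
        have hdiff : C \ {x | digits x 2 p = 1} = C ∩ {x | digits x 2 p = 0} := by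
          have hne : ∀ d : Fin 2, ¬d = 1 ↔ d = 0 := by decide
          ext x
          simp only [Set.mem_sdiff, Set.mem_inter_iff, Set.mem_ofPred_eq, hne]
        rw [← measure_inter_add_sdiff C (measurableSet_digits_eq p 1), hdiff, h01, two_mul]
      intro i
      rw [hC, ← mul_assoc, ENNReal.inv_mul_cancel two_ne_zero ENNReal.ofNat_ne_top, one_mul]
      fin_cases i
      · exact h01
      · rfl
    have hins : digitCylinder (insert p F) ε = C ∩ {x | digits x 2 p = ε p} := by
      ext x
      simp only [C, digitCylinder, mem_insert, forall_eq_or_imp, Set.mem_inter_iff,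
        Set.mem_ofPred_eq]
      tauto
    rw [hins, hhalf, ih, card_insert_of_notMem hp, pow_succ']

lemma volume_forall_digits_eq_of_injective {g : ℕ → ℕ} (hg : g.Injective) (ε : ℕ → Fin 2) :
    volume {x | x ∈ Set.Ico 0 1 ∧ ∀ n, digits x 2 (g n) = ε (g n)} = 0 := by
  refine le_antisymm (ge_of_tendsto' (ENNReal.tendsto_pow_atTop_nhds_zero_of_lt_one
    (by norm_num : (2⁻¹ : ENNReal) < 1)) fun N => ?_) zero_le
  calc volume {x | x ∈ Set.Ico 0 1 ∧ ∀ n, digits x 2 (g n) = ε (g n)}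
      ≤ volume (digitCylinder ((range N).image g) ε) :=
        measure_mono fun x ⟨hx, hxg⟩ => ⟨hx, by simpa using fun n _ => hxg n⟩
    _ = 2⁻¹ ^ N := by rw [volume_digitCylinder, card_image_of_injective _ hg, card_range]

end BinaryDigits

section StepFun

lemma find_lt_sum_Iic_eq_iff {n : ℕ} {w : Fin n → ℝ} (hw : ∀ i, 0 ≤ w i) {x : ℝ}
    (hx : 0 ≤ x) [DecidablePred fun i => x < ∑ j ∈ Iic i, w j]
    (h : ∃ k, x < ∑ j ∈ Iic k, w j) (i : Fin n) :
    Fin.find (fun i => x < ∑ j ∈ Iic i, w j) h = i ↔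
      x ∈ Set.Ico (∑ j ∈ Iio i, w j) (∑ j ∈ Iic i, w j) := by
  rw [Fin.find_eq_iff]
  refine ⟨fun ⟨hi, hmin⟩ => ⟨?_, hi⟩, fun ⟨hlo, hhi⟩ => ⟨hhi, fun j hj => not_lt.2 ?_⟩⟩
  · by_cases hi0 : (i : ℕ) = 0
    · have hIio : Iio i = ∅ := by
        ext j
        simp only [mem_Iio, Fin.lt_def, notMem_empty, iff_false]
        omega
      rwa [hIio, sum_empty]
    · have hIio : Iio i = Iic ⟨i - 1, by omega⟩ := by
        ext j
        simp only [mem_Iio, mem_Iic, Fin.lt_def, Fin.le_def]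
        omega
      rw [hIio]
      exact not_lt.1 (hmin _ (Fin.lt_def.2 (by dsimp; omega)))
  · refine le_trans (sum_le_sum_of_subset_of_nonneg (fun a ha => ?_) fun a _ _ => hw a) hlo
    simp only [mem_Iic, mem_Iio] at ha ⊢
    exact ha.trans_lt hj

variable {S : Type*} [Fintype S] {P : S → S → ℝ}

def cdfBefore (P : S → S → ℝ) (s t : S) : ℝ :=
  ∑ j ∈ Iio (Fintype.equivFin S t), P s ((Fintype.equivFin S).symm j)

lemma sum_Iic_equivFin (s t : S) :
    ∑ j ∈ Iic (Fintype.equivFin S t), P s ((Fintype.equivFin S).symm j) =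
      cdfBefore P s t + P s t := by
  rw [cdfBefore, ← Iio_insert, sum_insert notMem_Iio_self, Equiv.symm_apply_apply, add_comm]

lemma Ico_cdfBefore_subset (hP : IsStochastic P) (s t : S) :
    Set.Ico (cdfBefore P s t) (cdfBefore P s t + P s t) ⊆ Set.Ico 0 1 := by
  have h0 : 0 ≤ cdfBefore P s t := sum_nonneg fun j _ => hP.1 _ _
  have h1 : cdfBefore P s t + P s t ≤ 1 := by
    rw [← sum_Iic_equivFin, ← hP.2 s, ← (Fintype.equivFin S).symm.sum_comp]
    exact sum_le_sum_of_subset_of_nonneg (subset_univ _) fun j _ _ => hP.1 _ _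
  exact Set.Ico_subset_Ico h0 h1

variable [Nonempty S]

lemma stepFun_eq_iff (hP : IsStochastic P) {s t : S} {x : ℝ} (hx : x ∈ Set.Ico 0 1) :
    stepFun P s x = t ↔ x ∈ Set.Ico (cdfBefore P s t) (cdfBefore P s t + P s t) := by
  set e := Fintype.equivFin S
  have hcard : 0 < Fintype.card S := Fintype.card_pos
  have hlast : Iic (⟨Fintype.card S - 1, by omega⟩ : Fin (Fintype.card S)) = univ := by
    ext j
    simp only [mem_Iic, Fin.le_def, mem_univ, iff_true]
    omega
  have hex : ∃ k, x < ∑ j ∈ Iic k, P s (e.symm j) :=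
    ⟨_, by rw [hlast, e.symm.sum_comp (P s), hP.2 s]; exact hx.2⟩
  rw [stepFun, dif_pos hex, Equiv.symm_apply_eq,
    find_lt_sum_Iic_eq_iff (fun j => hP.1 _ _) hx.1, sum_Iic_equivFin]
  rfl

lemma pos_stepFun (hP : IsStochastic P) (s : S) {x : ℝ} (hx : x ∈ Set.Ico 0 1) :
    0 < P s (stepFun P s x) := by
  have h := (stepFun_eq_iff hP (s := s) hx).1 rfl
  linarith [h.1, h.2]

end StepFun

section ChainPaths

open Real

lemma abs_unifAt_sub_le {ω x : ℝ} (hω : 0 ≤ ω) (hx : x ∈ Set.Ico 0 1) {k q : ℕ}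
    (h : ∀ n < q, digits ω 2 (Nat.pair k n) = digits x 2 n) :
    |unifAt ω k - x| ≤ ((2 : ℝ) ^ q)⁻¹ := by
  rw [unifAt_eq_ofDigits hω, ← ofDigits_digits (b := 2) one_lt_two hx]
  exact_mod_cast abs_ofDigits_sub_ofDigits_le h

lemma unifAt_mem_Ico {ω : ℝ} (hω : 0 ≤ ω) {k n : ℕ} (hn : digits ω 2 (Nat.pair k n) = 0) :
    unifAt ω k ∈ Set.Ico 0 1 := by
  rw [unifAt_eq_ofDigits hω]
  exact ⟨ofDigits_nonneg _, ofDigits_lt_one hn⟩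

lemma ae_unifAt_mem_Ico :
    ∀ᵐ ω ∂volume.restrict (Set.Ico (0 : ℝ) 1), ∀ k, unifAt ω k ∈ Set.Ico 0 1 := by
  rw [ae_all_iff]
  intro k
  rw [ae_restrict_iff' measurableSet_Ico]
  filter_upwards [measure_eq_zero_iff_ae_notMem.1 (volume_forall_digits_eq_of_injective
    (g := Nat.pair k) (fun _ _ h => (Nat.pair_eq_pair.1 h).2) fun _ => 1)] with ω hω hωI
  simp only [not_and, not_forall] at hω
  obtain ⟨n, hn⟩ := hω hωI
  exact unifAt_mem_Ico hωI.1 (n := n) (by omega)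

variable {S : Type*} [Fintype S] [Nonempty S] {P : S → S → ℝ}

lemma trajFun_eq_of_stepFun_eq {v : ℕ → S} {m : ℕ} {ω : ℝ}
    (h : ∀ k < m, stepFun P (v k) (unifAt ω k) = v (k + 1)) :
    ∀ k ≤ m, trajFun P (v 0) ω k = v k := by
  intro k hk
  induction k with
  | zero => rfl
  | succ k ih => rw [trajFun, ih (by omega), h k (by omega)]

lemma volume_pos_trajFun_follows (hP : IsStochastic P) (v : ℕ → S) (m : ℕ)
    (hv : ∀ k < m, 0 < P (v k) (v (k + 1))) :
    0 < volume {ω | ω ∈ Set.Ico 0 1 ∧ ∀ k ≤ m, trajFun P (v 0) ω k = v k} := by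
  set c : ℕ → ℝ := fun k => cdfBefore P (v k) (v (k + 1))
  set w : ℕ → ℝ := fun k => P (v k) (v (k + 1))
  obtain ⟨q, hq⟩ : ∃ q : ℕ, ∀ k ∈ range m, ((2 : ℝ) ^ q)⁻¹ < w k / 2 :=
    ((eventually_all_finset _).2 fun k hk =>
      (tendsto_inv_atTop_zero.comp (tendsto_pow_atTop_atTop_of_one_lt one_lt_two)).eventually
        (gt_mem_nhds (half_pos (hv k (mem_range.1 hk))))).exists
  -- `stepFun` sends a neighbourhood of radius `w k / 2` of `x k` to the next state of the path,
  -- so it suffices that the first `q` binary digits of the `k`-th uniform agree with those of `x k`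
  set x : ℕ → ℝ := fun k => c k + w k / 2
  set F := (range m ×ˢ range q).image fun kn => Nat.pair kn.1 kn.2
  refine lt_of_lt_of_le ?_ (measure_mono (s := digitCylinder F fun p =>
    digits (x p.unpair.1) 2 p.unpair.2) fun ω ⟨hω, hωF⟩ => ⟨hω, ?_⟩)
  · rw [volume_digitCylinder]
    exact ENNReal.pow_pos (by norm_num) _
  refine trajFun_eq_of_stepFun_eq fun k hk => ?_
  have hwk : 0 < w k := hv k hk
  have hxk : x k = c k + w k / 2 := rfl
  have hclose : |unifAt ω k - x k| ≤ ((2 : ℝ) ^ q)⁻¹ :=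
    abs_unifAt_sub_le hω.1 (Ico_cdfBefore_subset hP _ _ ⟨by linarith, by linarith⟩) fun n hn => by
      simpa [Nat.unpair_pair] using
        hωF _ (mem_image.2 ⟨(k, n), mem_product.2 ⟨mem_range.2 hk, mem_range.2 hn⟩, rfl⟩)
  have hu : unifAt ω k ∈ Set.Ico (c k) (c k + w k) := by
    rw [abs_le] at hclose
    constructor <;> linarith [hq k (mem_range.2 hk)]
  exact (stepFun_eq_iff hP (Ico_cdfBefore_subset hP _ _ hu)).2 hu

lemma trajFun_mem_of_closed (hP : IsStochastic P) {B : Set S}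
    (hB : ∀ w ∈ B, ∀ w', 0 < P w w' → w' ∈ B) {s₀ : S} {ω : ℝ}
    (hω : ∀ k, unifAt ω k ∈ Set.Ico 0 1) {m : ℕ} (hm : trajFun P s₀ ω m ∈ B) :
    ∀ k ≥ m, trajFun P s₀ ω k ∈ B := by
  intro k hk
  induction k, hk using Nat.le_induction with
  | base => exact hm
  | succ k _ ih => exact hB _ ih _ (pos_stepFun hP _ (hω k))

end ChainPaths

section Recurrence

variable {S : Type*} [Fintype S] [Nonempty S] {P : S → S → ℝ} {s : S}

lemma Recurrent.ae_exists_return (hs : Recurrent P s) :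
    ∀ᵐ ω ∂volume.restrict (Set.Ico (0 : ℝ) 1), ∃ k ≥ 1, trajFun P s ω k = s := by
  let _ : MeasurableSpace S := ⊤
  have hE : MeasurableSet {x : ℕ → S | ∃ k ≥ 1, x k = s} := by
    simp only [Set.ofPred_exists, Set.ofPred_and]
    exact .iUnion fun k => (MeasurableSet.const _).inter
      (MeasurableSet.preimage (t := {s}) .of_discrete (measurable_pi_apply k))
  -- `Measure.map` of a map that is not a.e.-measurable is zero, which recurrence rules out
  have hmeas : AEMeasurable (trajFun P s) (volume.restrict (Set.Ico (0 : ℝ) 1)) := by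
    by_contra h
    simp [Recurrent, chainLaw, Measure.map_of_not_aemeasurable h] at hs
  have : IsProbabilityMeasure (volume.restrict (Set.Ico (0 : ℝ) 1)) := ⟨by simp⟩
  have := Measure.isProbabilityMeasure_map hmeas
  exact (ae_map_iff hmeas hE).1 (mem_ae_iff.2 ((prob_compl_eq_zero_iff hE).2 hs))

variable [DecidableEq S]

lemma Recurrent.reachable_of_reachable (hP : IsStochastic P) (hs : Recurrent P s) {t : S}
    (ht : Reachable P s t) : Reachable P t s := by
  by_contra hts
  have hne : t ≠ s := by
    rintro rfl
    exact hts ⟨0, by simp⟩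
  obtain ⟨m, v, hv0, hvm, hpos, havoid⟩ := exists_path_of_reachable hP ht hne
  set B : Set S := {w | ¬Reachable P w s}
  have hB : ∀ w ∈ B, ∀ w', 0 < P w w' → w' ∈ B :=
    fun w hw w' h h' => hw (reachable_of_pos_of_reachable hP h h')
  have hnull := ae_iff.1 (hs.ae_exists_return.and ae_unifAt_mem_Ico)
  rw [Measure.restrict_apply' measurableSet_Ico] at hnull
  refine (volume_pos_trajFun_follows hP v m hpos).ne' (measure_mono_null ?_ hnull)
  rintro ω ⟨hω, hfollow⟩
  refine ⟨fun ⟨⟨k, hk1, hks⟩, hunif⟩ => ?_, hω⟩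
  rw [hv0] at hfollow
  rcases le_or_gt k m with hkm | hkm
  · exact havoid k hk1 hkm (hfollow k hkm ▸ hks)
  · have hm : trajFun P s ω m ∈ B := by
      rw [hfollow m le_rfl, hvm]
      exact hts
    have hk := trajFun_mem_of_closed hP hB hunif hm k hkm.le
    rw [hks] at hk
    exact hk ⟨0, by simp⟩

end Recurrence

/-- A recurrent state lies in the support of some stationary pmf, whose support consists of
states reachable from it. -/
theorem stmt_6 {S : Type*} [Fintype S] [Nonempty S] [DecidableEq S]
    (P : S → S → ℝ) (hP : IsStochastic P) (s : S) (hs : Recurrent P s) :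
    ∃ π : S → ℝ, IsPmf π ∧ (∀ t' : S, ∑ t : S, π t * P t t' = π t') ∧
      0 < π s ∧ ∀ t : S, 0 < π t → Reachable P s t := by
  obtain ⟨π, hπ, hstat, hsupp⟩ := exists_stationary_of_cesaro hP.mem_rowStochastic s
  obtain ⟨u, -, hu⟩ := exists_lt_of_sum_lt (s := univ) (f := 0) (g := π) (by simp [hπ.2])
  obtain ⟨n, hn⟩ := hs.reachable_of_reachable hP (hsupp u hu)
  exact ⟨π, hπ, fun t' => congrFun hstat t',
    pos_of_vecMul_eq_self hP.mem_rowStochastic hπ.1 hstat hu hn, hsupp⟩
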